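/- Writing v_P = (v_P', v_P'') with v_P' ∈ H₁ and v_P'' ∈ H₂, the following hold: v_P' + A* v_P'' = 0 and σ_B(-v_P') + σ_C(-v_P'') = -‖v_P‖², where ‖v_P‖² = ‖v_P'‖² + ‖v_P''‖² and σ_D is the support function of D. -/

import Mathlib

open scoped InnerProductSpace Pointwise Classical
open Filter Topology

noncomputable section

variable {H₁ H₂ : Type*} [NormedAddCommGroup H₁] [InnerProductSpace ℝ H₁]
  [NormedAddCommGroup H₂] [InnerProductSpace ℝ H₂]

/-- The effective domain of an extended-real-valued function. -/
def fdom {α : Type*} (f : α → EReal) : Set α := {x | f x ≠ ⊤}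

/-- The indicator function of a set (0 on the set, `+∞` outside). -/
def indE {α : Type*} (s : Set α) (x : α) : EReal := if x ∈ s then 0 else ⊤

/-- The support function `σ_S(u) = sup_{x ∈ S} ⟪x, u⟫`. -/
def suppF {H : Type*} [NormedAddCommGroup H] [InnerProductSpace ℝ H]
    (s : Set H) (u : H) : EReal :=
  ⨆ x ∈ s, ((⟪x, u⟫_ℝ : ℝ) : EReal)

/-- The polar cone `S° = {u | ∀ x ∈ S, ⟪x, u⟫ ≤ 0}`. -/
def polarCone {H : Type*} [NormedAddCommGroup H] [InnerProductSpace ℝ H]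
    (s : Set H) : Set H := {u | ∀ x ∈ s, ⟪x, u⟫_ℝ ≤ 0}

/-- The recession cone `rec S = {x | ∀ y ∈ S, x + y ∈ S}`. -/
def recCone {H : Type*} [AddCommGroup H] (s : Set H) : Set H :=
  {x | ∀ y ∈ s, x + y ∈ s}

/-- `p` is the metric projection of `x` onto `S`, i.e. `p = P_S x`. -/
def IsProjOn {H : Type*} [NormedAddCommGroup H] [InnerProductSpace ℝ H]
    (S : Set H) (x p : H) : Prop := p ∈ S ∧ ∀ w ∈ S, dist x p ≤ dist x w

/-- The Fenchel conjugate on the Hilbert product `H₁ × H₂` (with the ℓ²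
inner product `⟪(z,y),(λ,μ)⟫ = ⟪z,λ⟫ + ⟪y,μ⟫`). -/
def pConj (f : H₁ × H₂ → EReal) : H₁ × H₂ → EReal :=
  fun u => ⨆ p : H₁ × H₂, ((⟪p.1, u.1⟫_ℝ + ⟪p.2, u.2⟫_ℝ : ℝ) : EReal) - f p

/-- `f(z, y) = ι_B(z) + ι_C(y)`. -/
def qpF (B : Set H₁) (C : Set H₂) : H₁ × H₂ → EReal :=
  fun p => indE B p.1 + indE C p.2

/-- `g(z, y) = ½⟪z, Qz⟫ + ⟪q, z⟫ + ι_{Az = y}(z, y)`. -/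
def qpG (Q : H₁ →L[ℝ] H₁) (q : H₁) (A : H₁ →L[ℝ] H₂) : H₁ × H₂ → EReal :=
  fun p => ((1 / 2 * ⟪p.1, Q p.1⟫_ℝ + ⟪q, p.1⟫_ℝ : ℝ) : EReal) +
    indE {r : H₁ × H₂ | A r.1 = r.2} p

/-- `v` is the element of minimum norm of `S ⊆ H₁ × H₂` with respect to the
Hilbert (ℓ²) product norm, i.e. `v = P_S 0`. -/
def IsMinNormPointP (S : Set (H₁ × H₂)) (v : H₁ × H₂) : Prop :=
  v ∈ S ∧ ∀ w ∈ S, ‖v.1‖ ^ 2 + ‖v.2‖ ^ 2 ≤ ‖w.1‖ ^ 2 + ‖w.2‖ ^ 2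

/-! Let `K = closure (B × C - graph A)`, the closed convex set `closure (dom f - dom g)`.
Its minimum-norm point `v` satisfies the variational inequality `‖v‖² ≤ ⟪w, v⟫` on `K`.
As `K` is invariant under translations by the subspace `graph A`, the linear functional
`⟪·, v⟫` is bounded below on `graph A`, so it vanishes there: this is `v' + A* v'' = 0`.
Consequently `⟪·, -v⟫` only sees the `B × C` component of `B × C - graph A`, so its supremum
over `K` is `σ_B(-v') + σ_C(-v'')`; the variational inequality bounds it by `-‖v‖²`, and the
point `v ∈ K` attains that value. -/

theorem inner_add_inner_apply_eq_inner_add_adjoint {𝕜 E F : Type*} [RCLike 𝕜]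
    [NormedAddCommGroup E] [InnerProductSpace 𝕜 E] [CompleteSpace E]
    [NormedAddCommGroup F] [InnerProductSpace 𝕜 F] [CompleteSpace F]
    (A : E →L[𝕜] F) (x z : E) (y : F) :
    ⟪z, x⟫_𝕜 + ⟪A z, y⟫_𝕜 = ⟪z, x + ContinuousLinearMap.adjoint A y⟫_𝕜 := by
  rw [inner_add_right, ContinuousLinearMap.adjoint_inner_right]

theorem eq_zero_of_forall_real_inner_le {E : Type*} [NormedAddCommGroup E] [InnerProductSpace ℝ E]
    {u : E} {M : ℝ} (h : ∀ z, ⟪z, u⟫_ℝ ≤ M) : u = 0 := by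
  by_contra hu
  have hpos : 0 < ‖u‖ ^ 2 := by positivity
  have := h (((M + 1) / ‖u‖ ^ 2) • u)
  rw [real_inner_smul_left, real_inner_self_eq_norm_sq, div_mul_cancel₀ _ hpos.ne'] at this
  linarith

theorem norm_sq_le_real_inner_of_forall_norm_le {E : Type*} [NormedAddCommGroup E]
    [InnerProductSpace ℝ E] {K : Set E} (hK : Convex ℝ K) {v : E} (hv : v ∈ K)
    (hmin : ∀ w ∈ K, ‖v‖ ≤ ‖w‖) {w : E} (hw : w ∈ K) : ‖v‖ ^ 2 ≤ ⟪w, v⟫_ℝ := by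
  have : Nonempty K := ⟨⟨v, hv⟩⟩
  have hinf : ‖0 - v‖ = ⨅ w : K, ‖0 - (w : E)‖ :=
    le_antisymm (le_ciInf fun w ↦ by simpa using hmin w w.2)
      (ciInf_le (f := fun w : K ↦ ‖0 - (w : E)‖)
        ⟨0, Set.forall_mem_range.2 fun _ ↦ norm_nonneg _⟩ ⟨v, hv⟩)
  have := (norm_eq_iInf_iff_real_inner_le_zero hK hv).1 hinf w hw
  rw [zero_sub, inner_neg_left, inner_sub_right, real_inner_self_eq_norm_sq, real_inner_comm] at this
  linarith

/-- `H₁ × H₂` carries the sup norm; the ℓ² geometry of `IsMinNormPointP` is that of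
`WithLp 2 (H₁ × H₂)`. -/
theorem IsMinNormPointP.norm_sq_le_real_inner {S : Set (H₁ × H₂)} (hS : Convex ℝ S)
    {v : H₁ × H₂} (hv : IsMinNormPointP S v) {w : H₁ × H₂} (hw : w ∈ S) :
    ‖v.1‖ ^ 2 + ‖v.2‖ ^ 2 ≤ ⟪w.1, v.1⟫_ℝ + ⟪w.2, v.2⟫_ℝ := by
  let e := WithLp.linearEquiv 2 ℝ (H₁ × H₂)
  have hmin : ∀ w' ∈ e ⁻¹' S, ‖e.symm v‖ ≤ ‖w'‖ := fun w' hw' ↦ by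
    rw [← sq_le_sq₀ (norm_nonneg _) (norm_nonneg _), WithLp.prod_norm_sq_eq_of_L2,
      WithLp.prod_norm_sq_eq_of_L2]
    exact hv.2 _ hw'
  have := norm_sq_le_real_inner_of_forall_norm_le (hS.linear_preimage e.toLinearMap)
    (by simpa using hv.1) hmin (w := e.symm w) (by simpa using hw)
  rwa [WithLp.prod_norm_sq_eq_of_L2] at this

theorem real_inner_le_suppF {H : Type*} [NormedAddCommGroup H] [InnerProductSpace ℝ H]
    {s : Set H} {x : H} (hx : x ∈ s) (u : H) : ((⟪x, u⟫_ℝ : ℝ) : EReal) ≤ suppF s u :=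
  le_iSup₂ (f := fun x _ ↦ ((⟪x, u⟫_ℝ : ℝ) : EReal)) x hx

theorem suppF_add_suppF_le {B : Set H₁} {C : Set H₂} {u₁ : H₁} {u₂ : H₂} {r : ℝ}
    (h : ∀ b ∈ B, ∀ c ∈ C, ⟪b, u₁⟫_ℝ + ⟪c, u₂⟫_ℝ ≤ r) : suppF B u₁ + suppF C u₂ ≤ r := by
  refine EReal.add_le_of_forall_lt fun a ha b hb ↦ ?_
  obtain ⟨x, hx, hax⟩ := lt_biSup_iff.1 ha
  obtain ⟨y, hy, hby⟩ := lt_biSup_iff.1 hb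
  calc a + b ≤ ((⟪x, u₁⟫_ℝ : ℝ) : EReal) + ((⟪y, u₂⟫_ℝ : ℝ) : EReal) := add_le_add hax.le hby.le
    _ ≤ r := mod_cast h x hx y hy

theorem fdom_qpF {α β : Type*} (B : Set α) (C : Set β) : fdom (qpF B C) = B ×ˢ C := by
  ext p
  simp only [fdom, qpF, indE, Set.mem_ofPred_eq, Set.mem_prod]
  split_ifs <;> simp_all

theorem fdom_qpG (Q : H₁ →L[ℝ] H₁) (q : H₁) (A : H₁ →L[ℝ] H₂) :
    fdom (qpG Q q A) = (A : H₁ →ₗ[ℝ] H₂).graph := by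
  ext p
  simp only [fdom, qpG, indE, Set.mem_ofPred_eq, SetLike.mem_coe, LinearMap.mem_graph_iff,
    ContinuousLinearMap.coe_coe, eq_comm (a := p.2)]
  by_cases h : A p.1 = p.2 <;> simp only [h, if_true, if_false, add_zero, ne_eq,
    EReal.coe_ne_top, EReal.coe_add_top, not_true, not_false_eq_true]

theorem real_inner_le_suppF_add_suppF_of_mem_closure {B : Set H₁} {C : Set H₂}
    {G : Set (H₁ × H₂)} {u : H₁ × H₂} (hG : ∀ g ∈ G, ⟪g.1, u.1⟫_ℝ + ⟪g.2, u.2⟫_ℝ = 0)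
    {w : H₁ × H₂} (hw : w ∈ closure (B ×ˢ C - G)) :
    ((⟪w.1, u.1⟫_ℝ + ⟪w.2, u.2⟫_ℝ : ℝ) : EReal) ≤ suppF B u.1 + suppF C u.2 := by
  refine closure_minimal (t := {w | ((⟪w.1, u.1⟫_ℝ + ⟪w.2, u.2⟫_ℝ : ℝ) : EReal) ≤
    suppF B u.1 + suppF C u.2}) ?_ (isClosed_le (continuous_coe_real_ereal.comp (by fun_prop))
    continuous_const) hw
  rintro _ ⟨f, ⟨hf₁, hf₂⟩, g, hg, rfl⟩
  have hfg : ⟪(f - g).1, u.1⟫_ℝ + ⟪(f - g).2, u.2⟫_ℝ = ⟪f.1, u.1⟫_ℝ + ⟪f.2, u.2⟫_ℝ := by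
    simp only [Prod.fst_sub, Prod.snd_sub, inner_sub_left]
    linarith [hG g hg]
  rw [Set.mem_ofPred_eq, hfg, EReal.coe_add]
  exact add_le_add (real_inner_le_suppF hf₁ _) (real_inner_le_suppF hf₂ _)

theorem add_adjoint_eq_zero_of_le_inner [CompleteSpace H₁] [CompleteSpace H₂]
    (A : H₁ →L[ℝ] H₂) {S : Set (H₁ × H₂)} (hS : S.Nonempty) {v : H₁ × H₂} {M : ℝ}
    (h : ∀ w ∈ S - (A : H₁ →ₗ[ℝ] H₂).graph, M ≤ ⟪w.1, v.1⟫_ℝ + ⟪w.2, v.2⟫_ℝ) :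
    v.1 + ContinuousLinearMap.adjoint A v.2 = 0 := by
  obtain ⟨s, hs⟩ := hS
  refine eq_zero_of_forall_real_inner_le (M := ⟪s.1, v.1⟫_ℝ + ⟪s.2, v.2⟫_ℝ - M) fun z ↦ ?_
  have := h (s - (z, A z)) (Set.sub_mem_sub hs (by simp))
  rw [← inner_add_inner_apply_eq_inner_add_adjoint]
  simp only [Prod.fst_sub, Prod.snd_sub, inner_sub_left] at this
  linarith

theorem real_inner_add_real_inner_eq_zero_of_mem_graph [CompleteSpace H₁] [CompleteSpace H₂]
    {A : H₁ →L[ℝ] H₂} {x : H₁} {y : H₂} (h : x + ContinuousLinearMap.adjoint A y = 0)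
    {g : H₁ × H₂} (hg : g ∈ (A : H₁ →ₗ[ℝ] H₂).graph) : ⟪g.1, x⟫_ℝ + ⟪g.2, y⟫_ℝ = 0 := by
  rw [(LinearMap.mem_graph_iff _ g).1 hg, ContinuousLinearMap.coe_coe,
    inner_add_inner_apply_eq_inner_add_adjoint, h, inner_zero_right]

theorem vP_certificate_properties_general {H₁ H₂ : Type*}
    [NormedAddCommGroup H₁] [InnerProductSpace ℝ H₁] [FiniteDimensional ℝ H₁]
    [NormedAddCommGroup H₂] [InnerProductSpace ℝ H₂] [FiniteDimensional ℝ H₂]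
    (Q : H₁ →L[ℝ] H₁)
    (q : H₁) (A : H₁ →L[ℝ] H₂)
    (B : Set H₁) (hBcv : Convex ℝ B)
    (C : Set H₂) (hCcv : Convex ℝ C)
    (vP : H₁ × H₂) (hvP : IsMinNormPointP (closure (fdom (qpF B C) - fdom (qpG Q q A))) vP)
    : vP.1 + (ContinuousLinearMap.adjoint A) vP.2 = 0 ∧
      suppF B (-vP.1) + suppF C (-vP.2) = ((-(‖vP.1‖ ^ 2 + ‖vP.2‖ ^ 2) : ℝ) : EReal) := by
  set G := (A : H₁ →ₗ[ℝ] H₂).graph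
  rw [fdom_qpF, fdom_qpG] at hvP
  have hvar : ∀ w ∈ B ×ˢ C - G, ‖vP.1‖ ^ 2 + ‖vP.2‖ ^ 2 ≤ ⟪w.1, vP.1⟫_ℝ + ⟪w.2, vP.2⟫_ℝ :=
    fun w hw ↦ hvP.norm_sq_le_real_inner ((hBcv.prod hCcv).sub G.convex).closure
      (subset_closure hw)
  have hadj : vP.1 + ContinuousLinearMap.adjoint A vP.2 = 0 :=
    add_adjoint_eq_zero_of_le_inner A (closure_nonempty_iff.1 ⟨vP, hvP.1⟩).of_image2_left hvar
  refine ⟨hadj, le_antisymm (suppF_add_suppF_le fun b hb c hc ↦ ?_) ?_⟩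
  · have := hvar (b, c) (by simpa using Set.sub_mem_sub (Set.mk_mem_prod hb hc) G.zero_mem)
    simp only [inner_neg_right]
    linarith
  · have hneg : -vP.1 + ContinuousLinearMap.adjoint A (-vP.2) = 0 := by
      rw [map_neg, ← neg_add, hadj, neg_zero]
    have := real_inner_le_suppF_add_suppF_of_mem_closure (u := -vP)
      (fun g hg ↦ real_inner_add_real_inner_eq_zero_of_mem_graph hneg hg) hvP.1
    rwa [Prod.fst_neg, Prod.snd_neg, inner_neg_right, inner_neg_right,
      real_inner_self_eq_norm_sq, real_inner_self_eq_norm_sq, ← neg_add] at this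

theorem vP_certificate_properties {H₁ H₂ : Type*}
    [NormedAddCommGroup H₁] [InnerProductSpace ℝ H₁] [FiniteDimensional ℝ H₁]
    [NormedAddCommGroup H₂] [InnerProductSpace ℝ H₂] [FiniteDimensional ℝ H₂]
    (Q : H₁ →L[ℝ] H₁) (hQsa : IsSelfAdjoint Q) (hQpos : ∀ z : H₁, 0 ≤ ⟪Q z, z⟫_ℝ)
    (q : H₁) (A : H₁ →L[ℝ] H₂)
    (B : Set H₁) (hBne : B.Nonempty) (hBcl : IsClosed B) (hBcv : Convex ℝ B)
    (C : Set H₂) (hCne : C.Nonempty) (hCcl : IsClosed C) (hCcv : Convex ℝ C)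
    (vP : H₁ × H₂) (hvP : IsMinNormPointP (closure (fdom (qpF B C) - fdom (qpG Q q A))) vP)
    : vP.1 + (ContinuousLinearMap.adjoint A) vP.2 = 0 ∧
      suppF B (-vP.1) + suppF C (-vP.2) = ((-(‖vP.1‖ ^ 2 + ‖vP.2‖ ^ 2) : ℝ) : EReal) :=
  vP_certificate_properties_general Q q A B hBcv C hCcv vP hvP

end
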